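/- arXiv:2206.14911 — 7 statements merged into one kernel-verified Lean document; each statement's English description precedes it below -/
import Mathlib

section
/- Let S ⊆ ℤ² ⊆ ℝ² be finite, let 0 < ε < 1, and let G = (S, E) be a Euclidean (1+ε)-spanner for S. Let a, b ∈ S be distinct points such that (i) the open segment between a and b contains no point of ℤ² (i.e. b − a is a primitive lattice vector), and (ii) every point of S whose distance from the line through a and b is at most (1/2)·√(2ε+ε²)·‖a − b‖ lies on the line through a and b. Then the edge {a, b} belongs to E. -/
/-- `G = (S, E)` is a Euclidean `(1+ε)`-spanner for `S`. -/
def IsSpanner (S : Set (EuclideanSpace ℝ (Fin 2)))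
    (E : Finset (Sym2 (EuclideanSpace ℝ (Fin 2)))) (ε : ℝ) : Prop :=
  (∀ e ∈ E, ¬ e.IsDiag ∧ ∀ x ∈ e, x ∈ S) ∧
  ∀ p ∈ S, ∀ q ∈ S, ∃ (m : ℕ) (x : Fin (m + 1) → EuclideanSpace ℝ (Fin 2)),
    x 0 = p ∧ x (Fin.last m) = q ∧ (∀ i, x i ∈ S) ∧
    (∀ i : Fin m, s(x i.castSucc, x i.succ) ∈ E) ∧
    ∑ i : Fin m, dist (x i.castSucc) (x i.succ) ≤ (1 + ε) * dist p q

/-- A point of the plane is a lattice point if both coordinates are integers. -/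
def IsLatticePoint (x : EuclideanSpace ℝ (Fin 2)) : Prop :=
  ∃ s t : ℤ, x 0 = s ∧ x 1 = t

/-! The spanner contains a path from `a` to `b` of length at most `(1 + ε) |ab|`. Each vertex `x`
of it satisfies `|ax| + |xb| ≤ (1 + ε) |ab|`, i.e. lies in the ellipse with foci `a`, `b` whose
semi-minor axis is `½ √(2ε + ε²) |ab|`; by the empty-slab hypothesis it is on the line `ab`, and a
lattice point on that line is `a + k (b - a)` with `k ∈ ℤ` because `b - a` is primitive. Consecutive
vertices are distinct, so every edge of the path has length at least `|ab|`, and a path of length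
below `2 |ab|` must be the single edge `ab`. -/

open AffineMap

theorem dist_add_dist_le_sum_dist_of_path {α : Type*} [PseudoMetricSpace α] {m : ℕ}
    (x : Fin (m + 1) → α) (i : Fin (m + 1)) :
    dist (x 0) (x i) + dist (x i) (x (Fin.last m)) ≤
      ∑ k : Fin m, dist (x k.castSucc) (x k.succ) := by
  set f : ℕ → α := fun j => x (Fin.clamp j m)
  have hf (j : Fin (m + 1)) : f j = x j := congrArg x (Fin.ext (min_eq_left j.is_le))
  have hsum : ∑ k : Fin m, dist (x k.castSucc) (x k.succ) =
      ∑ j ∈ Finset.Ico 0 m, dist (f j) (f (j + 1)) := by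
    rw [← Finset.range_eq_Ico, ← Fin.sum_univ_eq_sum_range (fun j => dist (f j) (f (j + 1)))]
    exact Finset.sum_congr rfl fun k _ => by rw [← hf k.castSucc, ← hf k.succ]; rfl
  rw [hsum, ← Finset.sum_Ico_consecutive _ i.val.zero_le i.is_le, ← hf 0, ← hf i,
    ← hf (Fin.last m)]
  exact add_le_add (dist_le_Ico_sum_dist f i.val.zero_le) (dist_le_Ico_sum_dist f i.is_le)

theorem sqrt_sq_add_sq_le_sqrt_add_sqrt (d α β : ℝ) :
    √((α + β) ^ 2 + (2 * d) ^ 2) ≤ √(α ^ 2 + d ^ 2) + √(β ^ 2 + d ^ 2) := by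
  simpa only [← Complex.norm_add_mul_I, Complex.ofReal_add, Complex.ofReal_mul,
    Complex.ofReal_ofNat, two_mul, add_mul, add_add_add_comm]
    using norm_add_le ((α : ℂ) + d * Complex.I) (β + d * Complex.I)

theorem dist_le_dist_lineMap_intCast {V P : Type*} [SeminormedAddCommGroup V] [NormedSpace ℝ V]
    [PseudoMetricSpace P] [NormedAddTorsor V P] {a b : P} {k l : ℤ}
    (h : lineMap a b (k : ℝ) ≠ lineMap a b (l : ℝ)) :
    dist a b ≤ dist (lineMap a b (k : ℝ)) (lineMap a b (l : ℝ)) := by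
  rw [dist_lineMap_lineMap, Int.dist_cast_real]
  exact le_mul_of_one_le_left dist_nonneg (Int.pairwise_one_le_dist fun hkl => h (hkl ▸ rfl))

section Line

open EuclideanGeometry

variable {V P : Type*} [NormedAddCommGroup V] [InnerProductSpace ℝ V] [MetricSpace P]
  [NormedAddTorsor V P]

theorem dist_sq_add_four_mul_infDist_sq_le (a b x : P) :
    dist a b ^ 2 + 4 * Metric.infDist x (line[ℝ, a, b] : Set P) ^ 2 ≤
      (dist a x + dist x b) ^ 2 := by
  set p : P := (orthogonalProjection line[ℝ, a, b] x : P)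
  have hp : p ∈ line[ℝ, a, b] := (orthogonalProjection line[ℝ, a, b] x).2
  have hax : dist a x = √(dist a p ^ 2 + dist x p ^ 2) := by
    rw [sq, sq, ← dist_sq_eq_dist_orthogonalProjection_sq_add_dist_orthogonalProjection_sq x
      (left_mem_affineSpan_pair ℝ a b), Real.sqrt_mul_self dist_nonneg]
  have hxb : dist x b = √(dist p b ^ 2 + dist x p ^ 2) := by
    rw [dist_comm x, dist_comm p, sq, sq,
      ← dist_sq_eq_dist_orthogonalProjection_sq_add_dist_orthogonalProjection_sq x
        (right_mem_affineSpan_pair ℝ a b), Real.sqrt_mul_self dist_nonneg]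
  have hinf : Metric.infDist x (line[ℝ, a, b] : Set P) ≤ dist x p :=
    Metric.infDist_le_dist_of_mem hp
  calc dist a b ^ 2 + 4 * Metric.infDist x (line[ℝ, a, b] : Set P) ^ 2
      ≤ (dist a p + dist p b) ^ 2 + (2 * dist x p) ^ 2 := by
        gcongr ?_ ^ 2 + ?_
        · exact dist_triangle a p b
        · nlinarith [Metric.infDist_nonneg (x := x) (s := (line[ℝ, a, b] : Set P))]
    _ = √((dist a p + dist p b) ^ 2 + (2 * dist x p) ^ 2) ^ 2 :=
        (Real.sq_sqrt (by positivity)).symm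
    _ ≤ (dist a x + dist x b) ^ 2 := by
        rw [hax, hxb]
        gcongr
        exact sqrt_sq_add_sq_le_sqrt_add_sqrt _ _ _

theorem infDist_affineSpan_pair_le_of_dist_add_dist_le {a b x : P} {ε : ℝ}
    (h : dist a x + dist x b ≤ (1 + ε) * dist a b) :
    Metric.infDist x (line[ℝ, a, b] : Set P) ≤ 1 / 2 * √(2 * ε + ε ^ 2) * dist a b := by
  set d := Metric.infDist x (line[ℝ, a, b] : Set P)
  have hsq : (2 * d) ^ 2 ≤ (2 * ε + ε ^ 2) * dist a b ^ 2 := by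
    have := (pow_le_pow_left₀ (add_nonneg dist_nonneg dist_nonneg) h 2).trans'
      (dist_sq_add_four_mul_infDist_sq_le a b x)
    linarith
  have : 2 * d ≤ √(2 * ε + ε ^ 2) * dist a b := by
    calc 2 * d = √((2 * d) ^ 2) :=
          (Real.sqrt_sq (mul_nonneg zero_le_two Metric.infDist_nonneg)).symm
      _ ≤ √((2 * ε + ε ^ 2) * dist a b ^ 2) := Real.sqrt_le_sqrt hsq
      _ = √(2 * ε + ε ^ 2) * dist a b := by
          rw [Real.sqrt_mul' _ (sq_nonneg _), Real.sqrt_sq dist_nonneg]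
  linarith

end Line

theorem lineMap_apply_coord {ι : Type*} (a b : EuclideanSpace ℝ ι) (t : ℝ) (i : ι) :
    lineMap a b t i = a i + t * (b i - a i) := by
  simp [lineMap_apply_module', add_comm]

theorem isLatticePoint_lineMap_fract {a b : EuclideanSpace ℝ (Fin 2)} {t : ℝ}
    (ha : IsLatticePoint a) (hb : IsLatticePoint b) (ht : IsLatticePoint (lineMap a b t)) :
    IsLatticePoint (lineMap a b (Int.fract t)) := by
  obtain ⟨a₀, a₁, ha₀, ha₁⟩ := ha
  obtain ⟨b₀, b₁, hb₀, hb₁⟩ := hb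
  obtain ⟨s₀, s₁, hs₀, hs₁⟩ := ht
  rw [lineMap_apply_coord, ha₀, hb₀] at hs₀
  rw [lineMap_apply_coord, ha₁, hb₁] at hs₁
  refine ⟨s₀ - ⌊t⌋ * (b₀ - a₀), s₁ - ⌊t⌋ * (b₁ - a₁), ?_, ?_⟩
  · rw [lineMap_apply_coord, ha₀, hb₀, Int.fract]; push_cast; linear_combination hs₀
  · rw [lineMap_apply_coord, ha₁, hb₁, Int.fract]; push_cast; linear_combination hs₁

theorem exists_intCast_lineMap_eq {a b x : EuclideanSpace ℝ (Fin 2)}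
    (ha : IsLatticePoint a) (hb : IsLatticePoint b)
    (hseg : ∀ x ∈ openSegment ℝ a b, ¬ IsLatticePoint x)
    (hx : IsLatticePoint x) (hxl : x ∈ line[ℝ, a, b]) : ∃ k : ℤ, lineMap a b (k : ℝ) = x := by
  obtain ⟨t, rfl⟩ := mem_affineSpan_pair_iff_exists_lineMap_eq.mp hxl
  refine ⟨⌊t⌋, congrArg _ ?_⟩
  -- otherwise `lineMap a b (Int.fract t)` is a lattice point strictly between `a` and `b`
  by_contra hne
  have hfract : Int.fract t ∈ Set.Ioo (0 : ℝ) 1 :=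
    ⟨(Int.fract_nonneg t).lt_of_ne' (by rwa [Int.fract, sub_ne_zero, ne_comm]),
      Int.fract_lt_one t⟩
  exact hseg _ (openSegment_eq_image_lineMap ℝ a b ▸ Set.mem_image_of_mem _ hfract)
    (isLatticePoint_lineMap_fract ha hb hx)

theorem empty_slab_edge_general (S : Set (EuclideanSpace ℝ (Fin 2)))
    (hlat : ∀ x ∈ S, IsLatticePoint x)
    (ε : ℝ) (hε1 : ε < 1)
    (E : Finset (Sym2 (EuclideanSpace ℝ (Fin 2)))) (hG : IsSpanner S E ε)
    (a b : EuclideanSpace ℝ (Fin 2)) (ha : a ∈ S) (hb : b ∈ S) (hab : a ≠ b)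
    (hseg : ∀ x ∈ openSegment ℝ a b, ¬ IsLatticePoint x)
    (hslab : ∀ x ∈ S,
      Metric.infDist x (affineSpan ℝ {a, b} : Set (EuclideanSpace ℝ (Fin 2))) ≤
        (1 / 2) * Real.sqrt (2 * ε + ε ^ 2) * dist a b →
      x ∈ affineSpan ℝ {a, b}) :
    s(a, b) ∈ E := by
  obtain ⟨hloopless, hpath⟩ := hG
  obtain ⟨m, x, hx0, hxm, hxS, hedge, hlen⟩ := hpath a ha b hb
  have hvertex (i : Fin (m + 1)) : ∃ k : ℤ, lineMap a b (k : ℝ) = x i := by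
    have hell : dist a (x i) + dist (x i) b ≤ (1 + ε) * dist a b := by
      simpa only [hx0, hxm] using (dist_add_dist_le_sum_dist_of_path x i).trans hlen
    exact exists_intCast_lineMap_eq (hlat a ha) (hlat b hb) hseg (hlat _ (hxS i))
      (hslab _ (hxS i) (infDist_affineSpan_pair_le_of_dist_add_dist_le hell))
  choose k hk using hvertex
  have hstep (i : Fin m) : dist a b ≤ dist (x i.castSucc) (x i.succ) := by
    have hne : x i.castSucc ≠ x i.succ := fun h =>
      (hloopless _ (hedge i)).1 (Sym2.mk_isDiag_iff.mpr h)
    rw [← hk, ← hk] at hne ⊢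
    exact dist_le_dist_lineMap_intCast hne
  rcases m with _ | _ | m
  · exact absurd (hx0.symm.trans hxm) hab
  · exact hx0 ▸ hxm ▸ hedge 0
  · have hL : 0 < dist a b := dist_pos.mpr hab
    have := (Finset.card_nsmul_le_sum _ _ _ fun i _ => hstep i).trans hlen
    simp only [Finset.card_univ, Fintype.card_fin, nsmul_eq_mul, Nat.cast_add, Nat.cast_one]
      at this
    nlinarith [m.cast_nonneg (α := ℝ)]

/-- Empty slab condition for lattice point sets: if the open segment `ab` contains no
lattice point, and every point of `S` within distance `(1/2)·√(2ε+ε²)·‖a-b‖` of the line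
through `a` and `b` lies on that line, then every Euclidean `(1+ε)`-spanner for `S`
contains the edge `{a,b}`. -/
theorem empty_slab_edge (S : Set (EuclideanSpace ℝ (Fin 2))) (hS : S.Finite)
    (hlat : ∀ x ∈ S, IsLatticePoint x)
    (ε : ℝ) (hε0 : 0 < ε) (hε1 : ε < 1)
    (E : Finset (Sym2 (EuclideanSpace ℝ (Fin 2)))) (hG : IsSpanner S E ε)
    (a b : EuclideanSpace ℝ (Fin 2)) (ha : a ∈ S) (hb : b ∈ S) (hab : a ≠ b)
    (hseg : ∀ x ∈ openSegment ℝ a b, ¬ IsLatticePoint x)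
    (hslab : ∀ x ∈ S,
      Metric.infDist x (affineSpan ℝ {a, b} : Set (EuclideanSpace ℝ (Fin 2))) ≤
        (1 / 2) * Real.sqrt (2 * ε + ε ^ 2) * dist a b →
      x ∈ affineSpan ℝ {a, b}) :
    s(a, b) ∈ E :=
  empty_slab_edge_general S hlat ε hε1 E hG a b ha hb hab hseg hslab
end

section
/- Let 0 < ε < 1/9 and let p, q ∈ ℝ² be distinct points. Then for every point b ∈ B(p,q), one has (1 + ε/2)·‖p − q‖ + (1 + ε)·‖q − b‖ ≤ (1 + ε)·‖p − b‖. -/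
/-- The cone `W₁` with apex `p`, axis direction `q - p`, and aperture `√ε/2`. -/
def W1 (ε : ℝ) (p q : EuclideanSpace ℝ (Fin 2)) : Set (EuclideanSpace ℝ (Fin 2)) :=
  {x | x = p ∨ InnerProductGeometry.angle (x - p) (q - p) ≤ Real.sqrt ε / 4}

/-- The cone `W₂` with apex `q`, axis direction `q - p`, and aperture `√ε`. -/
def W2 (ε : ℝ) (p q : EuclideanSpace ℝ (Fin 2)) : Set (EuclideanSpace ℝ (Fin 2)) :=
  {x | x = q ∨ InnerProductGeometry.angle (x - q) (q - p) ≤ Real.sqrt ε / 2}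

/-- The region `B(p,q) = W₁ ∩ W₂`. -/
def Bset (ε : ℝ) (p q : EuclideanSpace ℝ (Fin 2)) : Set (EuclideanSpace ℝ (Fin 2)) :=
  W1 ε p q ∩ W2 ε p q

/-!
If `b - q` makes an angle at most `√ε/2` with `q - p`, then
`⟪b - q, q - p⟫ ≥ (1 - ε/8)‖b - q‖‖q - p‖` since `cos θ ≥ 1 - θ²/2`, so by the law of cosines
`‖p - b‖² ≥ d² + r² + 2(1 - ε/8) r d` with `d = ‖p - q‖`, `r = ‖q - b‖`. Multiplying by `(1 + ε)²`
dominates `((1 + ε/2) d + (1 + ε) r)²` term by term, because `(1 + ε)(1 - ε/8) ≥ 1 + ε/2` for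
`0 ≤ ε ≤ 3`.
-/

open InnerProductGeometry

theorem InnerProductGeometry.one_sub_sq_div_two_mul_le_inner_of_angle_le
    {V : Type*} [NormedAddCommGroup V] [InnerProductSpace ℝ V] {x y : V} {θ : ℝ}
    (h : angle x y ≤ θ) : (1 - θ ^ 2 / 2) * (‖x‖ * ‖y‖) ≤ inner ℝ x y := by
  have hsq : angle x y ^ 2 ≤ θ ^ 2 := pow_le_pow_left₀ (angle_nonneg x y) h 2
  have hcos : 1 - θ ^ 2 / 2 ≤ Real.cos (angle x y) := by
    linarith [Real.one_sub_sq_div_two_le_cos (x := angle x y)]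
  rw [← cos_angle_mul_norm_mul_norm]
  exact mul_le_mul_of_nonneg_right hcos (by positivity)

theorem weighted_add_le_of_sq_le {ε d r R : ℝ} (hε0 : 0 ≤ ε) (hε3 : ε ≤ 3)
    (hd : 0 ≤ d) (hr : 0 ≤ r) (hR : 0 ≤ R)
    (h : d ^ 2 + r ^ 2 + 2 * (1 - ε / 8) * (r * d) ≤ R ^ 2) :
    (1 + ε / 2) * d + (1 + ε) * r ≤ (1 + ε) * R := by
  apply le_of_sq_le_sq _ (by positivity)
  have hrd : 0 ≤ r * d * ((1 + ε) * ε * (3 - ε)) := by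
    have : 0 ≤ 3 - ε := by linarith
    positivity
  nlinarith [mul_le_mul_of_nonneg_left h (sq_nonneg (1 + ε)), mul_nonneg (sq_nonneg d) hε0]

theorem add_mul_norm_sub_le_of_angle_le {V : Type*} [NormedAddCommGroup V]
    [InnerProductSpace ℝ V] {ε : ℝ} (hε0 : 0 ≤ ε) (hε3 : ε ≤ 3) {p q b : V}
    (h : angle (b - q) (q - p) ≤ √ε / 2) :
    (1 + ε / 2) * ‖p - q‖ + (1 + ε) * ‖q - b‖ ≤ (1 + ε) * ‖p - b‖ := by
  have hinner := one_sub_sq_div_two_mul_le_inner_of_angle_le h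
  rw [show (√ε / 2) ^ 2 / 2 = ε / 8 by rw [div_pow, Real.sq_sqrt hε0]; ring,
    norm_sub_rev b q, norm_sub_rev q p] at hinner
  have hcosine : ‖p - b‖ ^ 2 = ‖p - q‖ ^ 2 + ‖q - b‖ ^ 2 + 2 * inner ℝ (b - q) (q - p) := by
    rw [show p - b = (p - q) - (b - q) by abel, norm_sub_sq_real, norm_sub_rev b q,
      ← neg_sub q p, inner_neg_left, real_inner_comm]
    ring
  apply weighted_add_le_of_sq_le hε0 hε3 (norm_nonneg _) (norm_nonneg _) (norm_nonneg _)
  rw [hcosine]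
  linear_combination 2 * hinner

theorem key_ineq_B_general (ε : ℝ) (hε0 : 0 < ε) (hε1 : ε < 1 / 9)
    (p q : EuclideanSpace ℝ (Fin 2))
    (b : EuclideanSpace ℝ (Fin 2)) (hb : b ∈ Bset ε p q) :
    (1 + ε / 2) * ‖p - q‖ + (1 + ε) * ‖q - b‖ ≤ (1 + ε) * ‖p - b‖ := by
  rcases hb.2 with rfl | hangle
  · simp only [sub_self, norm_zero, mul_zero, add_zero]
    exact mul_le_mul_of_nonneg_right (by linarith) (norm_nonneg _)
  · exact add_mul_norm_sub_le_of_angle_le hε0.le (by linarith) hangle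

/-- For all `b ∈ B(p,q)`:
`(1 + ε/2)·‖p - q‖ + (1 + ε)·‖q - b‖ ≤ (1 + ε)·‖p - b‖`. -/
theorem key_ineq_B (ε : ℝ) (hε0 : 0 < ε) (hε1 : ε < 1 / 9)
    (p q : EuclideanSpace ℝ (Fin 2)) (hpq : p ≠ q)
    (b : EuclideanSpace ℝ (Fin 2)) (hb : b ∈ Bset ε p q) :
    (1 + ε / 2) * ‖p - q‖ + (1 + ε) * ‖q - b‖ ≤ (1 + ε) * ‖p - b‖ :=
  key_ineq_B_general ε hε0 hε1 p q b hb
end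

section
/- Let 0 < ε < 1/9 and let p, q ∈ ℝ² be distinct points. Then for every point a ∈ Ā(p,q) and every point b ∈ B(p,q), one has (1 + ε)·‖a − p‖ + (1 + ε/3)·‖p − q‖ + (1 + ε)·‖q − b‖ ≤ (1 + ε)·‖a − b‖. -/
/-- The segment `Ā(p,q)` of length `(√ε/2)·‖q-p‖` on the line `pq`, with one endpoint
at `p`, emanating away from `q`. -/
def Abar (ε : ℝ) (p q : EuclideanSpace ℝ (Fin 2)) : Set (EuclideanSpace ℝ (Fin 2)) :=
  {x | ∃ t : ℝ, 0 ≤ t ∧ t ≤ Real.sqrt ε / 2 * ‖q - p‖ ∧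
    x = p - (t / ‖q - p‖) • (q - p)}

/-!
Write `d = ‖q - p‖`, `s = ‖q - b‖` and `a = p - t·u` with `u` the unit vector from `p` to `q`,
so `0 ≤ t ≤ (√ε/2)·d ≤ d/6`. Then `b - a = (b - q) + (d + t)·u`, and since `b ∈ W₂` the
vector `b - q` makes an angle at most `√ε/2` with `u`. The law of cosines with
`cos (√ε/2) ≥ 1 - ε/8` gives `‖a - b‖² ≥ (t + d + s)² - (ε/4)(d + t)s`, and this deficit is
absorbed by the slack `(2ε/3)·d` between the weights `1 + ε` and `1 + ε/3` on the middle edge.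
-/
open InnerProductGeometry Real RealInnerProductSpace

section InnerProductSpace

variable {V : Type*} [NormedAddCommGroup V] [InnerProductSpace ℝ V]

theorem norm_mul_norm_mul_cos_le_inner_of_angle_le {x y : V} {θ : ℝ} (hθ : θ ≤ π)
    (h : angle x y ≤ θ) : ‖x‖ * ‖y‖ * cos θ ≤ ⟪x, y⟫ := by
  rw [← cos_angle_mul_norm_mul_norm, mul_comm]
  exact mul_le_mul_of_nonneg_right (cos_le_cos_of_nonneg_of_le_pi (angle_nonneg x y) hθ h)
    (by positivity)

theorem sq_le_norm_add_smul_sq {x y : V} {κ c : ℝ} (hc : 0 ≤ c)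
    (h : ‖x‖ * ‖y‖ * κ ≤ ⟪x, y⟫) :
    ‖x‖ ^ 2 + (c * ‖y‖) ^ 2 + 2 * ‖x‖ * (c * ‖y‖) * κ ≤ ‖x + c • y‖ ^ 2 := by
  rw [norm_add_sq_real, real_inner_smul_right, norm_smul, norm_of_nonneg hc]
  nlinarith [mul_le_mul_of_nonneg_left h hc]

end InnerProductSpace

theorem norm_mul_norm_mul_cos_le_inner_of_mem_W2 {ε : ℝ} {p q b : EuclideanSpace ℝ (Fin 2)}
    (hε : √ε / 2 ≤ π) (hb : b ∈ W2 ε p q) :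
    ‖b - q‖ * ‖q - p‖ * cos (√ε / 2) ≤ ⟪b - q, q - p⟫ := by
  rcases hb with rfl | hangle
  · simp
  · exact norm_mul_norm_mul_cos_le_inner_of_angle_le hε hangle

theorem weighted_path_le_of_sq_le {ε d t s N : ℝ} (hε0 : 0 < ε) (hε1 : ε < 1 / 9)
    (ht0 : 0 ≤ t) (ht : t ≤ d / 6) (hs : 0 ≤ s) (hN : 0 ≤ N)
    (h : (t + d + s) ^ 2 - ε / 4 * (d + t) * s ≤ N ^ 2) :
    (1 + ε) * t + (1 + ε / 3) * d + (1 + ε) * s ≤ (1 + ε) * N := by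
  have hd : 0 ≤ d := by linarith
  refine le_of_pow_le_pow_left₀ two_ne_zero (by positivity) ?_
  nlinarith [mul_le_mul_of_nonneg_left h (sq_nonneg (1 + ε)), mul_nonneg hs hd,
    mul_nonneg (mul_nonneg hs hd) hε0.le, mul_nonneg (mul_nonneg hs ht0) hε0.le,
    mul_nonneg (mul_nonneg hs (by linarith : 0 ≤ d / 6 - t)) hε0.le,
    mul_nonneg (mul_nonneg (mul_nonneg hs hd) hε0.le) hε0.le,
    mul_nonneg (mul_nonneg (mul_nonneg hs ht0) hε0.le) hε0.le,
    mul_nonneg (mul_nonneg ht0 hd) hε0.le, mul_nonneg (mul_nonneg hd hd) hε0.le,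
    mul_nonneg (mul_nonneg (mul_nonneg hd hd) hε0.le) hε0.le]

/-- For all `a ∈ Ā(p,q)` and `b ∈ B(p,q)`:
`(1+ε)·‖a-p‖ + (1+ε/3)·‖p-q‖ + (1+ε)·‖q-b‖ ≤ (1+ε)·‖a-b‖`. -/
theorem key_ineq_Abar_B (ε : ℝ) (hε0 : 0 < ε) (hε1 : ε < 1 / 9)
    (p q : EuclideanSpace ℝ (Fin 2)) (hpq : p ≠ q)
    (a b : EuclideanSpace ℝ (Fin 2)) (ha : a ∈ Abar ε p q) (hb : b ∈ Bset ε p q) :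
    (1 + ε) * ‖a - p‖ + (1 + ε / 3) * ‖p - q‖ + (1 + ε) * ‖q - b‖ ≤
      (1 + ε) * ‖a - b‖ := by
  obtain ⟨t, ht0, ht, rfl⟩ := ha
  set d := ‖q - p‖
  have hd : 0 < d := norm_pos_iff.2 (sub_ne_zero.2 hpq.symm)
  have hsqrt : √ε < 1 / 3 := (sqrt_lt' (by norm_num)).2 (by linarith)
  have hcos : 1 - ε / 8 ≤ cos (√ε / 2) := by
    have := one_sub_sq_div_two_le_cos (x := √ε / 2)
    rw [div_pow, sq_sqrt hε0.le] at this
    linarith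
  have hinner := norm_mul_norm_mul_cos_le_inner_of_mem_W2 (by linarith [pi_gt_three]) hb.2
  have hlaw := sq_le_norm_add_smul_sq (c := 1 + t / d) (by positivity) hinner
  rw [show (1 + t / d) * d = d + t by field_simp] at hlaw
  have hap : p - (t / d) • (q - p) - p = -((t / d) • (q - p)) := by abel
  have hab : p - (t / d) • (q - p) - b = -((b - q) + (1 + t / d) • (q - p)) := by module
  rw [hap, hab, norm_neg, norm_neg, norm_smul, norm_of_nonneg (by positivity),
    div_mul_cancel₀ t hd.ne', norm_sub_rev p q, norm_sub_rev q b]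
  refine weighted_path_le_of_sq_le hε0 hε1 ht0 (by nlinarith) (norm_nonneg _) (norm_nonneg _) ?_
  nlinarith [mul_le_mul_of_nonneg_left hcos (mul_nonneg (norm_nonneg (b - q)) (by positivity :
    0 ≤ d + t))]
end

section
/- Let 0 < ε < 1/9 and let p, q ∈ ℝ² be distinct points. Then for every point a ∈ Ã(p,q) and every point b ∈ B̂(p,q), one has (1 + ε)·‖a − p‖ + ‖p − q‖ + (1 + ε)·‖q − b‖ ≤ (1 + ε)·‖a − b‖. -/
/-- `Ã(p,q)`: the points within distance `(3ε/32)·‖q-p‖` of `Ā(p,q)`. -/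
def Atilde (ε : ℝ) (p q : EuclideanSpace ℝ (Fin 2)) : Set (EuclideanSpace ℝ (Fin 2)) :=
  {x | ∃ y ∈ Abar ε p q, dist x y ≤ 3 * ε / 32 * ‖q - p‖}

/-- `B̂(p,q)`: the points within distance `(ε/32)·‖q-p‖` of `B(p,q)`. -/
def Bhat (ε : ℝ) (p q : EuclideanSpace ℝ (Fin 2)) : Set (EuclideanSpace ℝ (Fin 2)) :=
  {x | ∃ y ∈ Bset ε p q, dist x y ≤ ε / 32 * ‖q - p‖}

/-! The point `c ∈ B(p,q)` near `b` lies in the cone `W₂`, whose apex is `q` and whose axis points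
away from the point `y ∈ Ā(p,q)` near `a`. Hence the broken path `y → q → c` is almost straight:
projecting onto the direction of `c - q` gives `‖c - y‖ ≥ ‖c - q‖ + cos(√ε/2)·‖q - y‖`, with
`cos(√ε/2) ≥ 1 - ε/8`. Moving from `y, c` to `a, b` costs `O(ε‖q - p‖)`, and so does the defect
`ε/8·‖q - y‖`; both are paid for by the factor `1 + ε` in front of `‖a - b‖ ≥ ‖p - q‖`. -/

open InnerProductGeometry Real
open scoped InnerProductSpace

section InnerProductSpace

variable {V : Type*} [NormedAddCommGroup V] [InnerProductSpace ℝ V]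

theorem cos_mul_norm_mul_norm_le_inner_of_angle_le {x y : V} {θ : ℝ} (hθ : θ ≤ π)
    (h : angle x y ≤ θ) : cos θ * (‖x‖ * ‖y‖) ≤ ⟪x, y⟫_ℝ := by
  rw [← cos_angle_mul_norm_mul_norm]
  gcongr
  exact cos_le_cos_of_nonneg_of_le_pi (angle_nonneg x y) hθ h

theorem norm_add_mul_norm_le_norm_add {x w : V} {κ : ℝ} (hκ : κ ≤ 1)
    (h : κ * (‖x‖ * ‖w‖) ≤ ⟪x, w⟫_ℝ) : ‖x‖ + κ * ‖w‖ ≤ ‖x + w‖ := by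
  rcases eq_or_ne x 0 with rfl | hx
  · simpa using mul_le_of_le_one_left (norm_nonneg w) hκ
  have hx : 0 < ‖x‖ := norm_pos_iff.mpr hx
  refine le_of_mul_le_mul_right ?_ hx
  calc (‖x‖ + κ * ‖w‖) * ‖x‖ ≤ ⟪x + w, x⟫_ℝ := by
        rw [inner_add_left, real_inner_self_eq_norm_sq, real_inner_comm]; nlinarith
    _ ≤ ‖x + w‖ * ‖x‖ := real_inner_le_norm _ _

end InnerProductSpace

theorem one_sub_div_eight_le_cos_sqrt_div_two {ε : ℝ} (hε : 0 ≤ ε) :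
    1 - ε / 8 ≤ cos (√ε / 2) := by
  have := one_sub_sq_div_two_le_cos (x := √ε / 2)
  rwa [div_pow, sq_sqrt hε, show ε / 2 ^ 2 / 2 = ε / 8 by ring] at this

section Regions

variable {ε : ℝ} {p q : EuclideanSpace ℝ (Fin 2)}

theorem le_inner_of_mem_W2 (hε0 : 0 ≤ ε) (hεπ : √ε / 2 ≤ π) {c : EuclideanSpace ℝ (Fin 2)}
    (hc : c ∈ W2 ε p q) : (1 - ε / 8) * (‖c - q‖ * ‖q - p‖) ≤ ⟪c - q, q - p⟫_ℝ := by
  rcases hc with rfl | hc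
  · simp
  calc (1 - ε / 8) * (‖c - q‖ * ‖q - p‖) ≤ cos (√ε / 2) * (‖c - q‖ * ‖q - p‖) := by
        gcongr; exact one_sub_div_eight_le_cos_sqrt_div_two hε0
    _ ≤ ⟪c - q, q - p⟫_ℝ := cos_mul_norm_mul_norm_le_inner_of_angle_le hεπ hc

theorem exists_eq_sub_smul_of_mem_Abar {y : EuclideanSpace ℝ (Fin 2)} (hy : y ∈ Abar ε p q) :
    ∃ s : ℝ, 0 ≤ s ∧ s * ‖q - p‖ ≤ √ε / 2 * ‖q - p‖ ∧ y = p - s • (q - p) := by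
  obtain ⟨t, ht0, ht, rfl⟩ := hy
  -- when `p = q`, the junk value `t / 0 = 0` is still a valid `s`, since then `t = 0`
  refine ⟨t / ‖q - p‖, by positivity, ?_, rfl⟩
  rwa [div_mul_cancel_of_imp fun h ↦ by rw [h, mul_zero] at ht; linarith]

theorem norm_sub_add_le_norm_sub_of_mem_W2 (hε0 : 0 ≤ ε) (hεπ : √ε / 2 ≤ π)
    {c : EuclideanSpace ℝ (Fin 2)} (hc : c ∈ W2 ε p q) {s : ℝ} (hs : 0 ≤ s) :
    ‖c - q‖ + (1 - ε / 8) * ((1 + s) * ‖q - p‖) ≤ ‖c - (p - s • (q - p))‖ := by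
  have h1s : 0 ≤ 1 + s := by linarith
  have key := norm_add_mul_norm_le_norm_add (x := c - q) (w := (1 + s) • (q - p))
    (κ := 1 - ε / 8) (by linarith) (by
      rw [real_inner_smul_right, norm_smul, Real.norm_of_nonneg h1s]
      nlinarith [le_inner_of_mem_W2 hε0 hεπ hc])
  rwa [norm_smul, Real.norm_of_nonneg h1s,
    show c - q + (1 + s) • (q - p) = c - (p - s • (q - p)) by module] at key

end Regions

theorem key_ineq_Atilde_Bhat_general (ε : ℝ) (hε0 : 0 < ε) (hε1 : ε < 1 / 9)
    (p q : EuclideanSpace ℝ (Fin 2))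
    (a b : EuclideanSpace ℝ (Fin 2)) (ha : a ∈ Atilde ε p q) (hb : b ∈ Bhat ε p q) :
    (1 + ε) * ‖a - p‖ + ‖p - q‖ + (1 + ε) * ‖q - b‖ ≤ (1 + ε) * ‖a - b‖ := by
  obtain ⟨y, hy, hay⟩ := ha
  obtain ⟨c, ⟨-, hc⟩, hbc⟩ := hb
  obtain ⟨s, hs0, hsd, rfl⟩ := exists_eq_sub_smul_of_mem_Abar hy
  set y := p - s • (q - p)
  set d := ‖q - p‖
  have hε : 0 ≤ ε := hε0.le
  rw [dist_eq_norm] at hay hbc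
  have hsqrt : √ε ≤ 1 / 3 := by
    rw [sqrt_le_left (by norm_num)]; linarith
  have hsd : s * d ≤ d / 6 := hsd.trans (by nlinarith [norm_nonneg (q - p)])
  have hcy := norm_sub_add_le_norm_sub_of_mem_W2 hε (by linarith [pi_gt_three]) hc hs0
  have hap : ‖a - p‖ ≤ ‖a - y‖ + s * d := by
    simpa [y, norm_smul, abs_of_nonneg hs0] using norm_sub_le_norm_sub_add_norm_sub a y p
  have hqb : ‖q - b‖ ≤ ‖c - q‖ + ‖b - c‖ := by
    simpa [norm_sub_rev q c, norm_sub_rev c b] using norm_sub_le_norm_sub_add_norm_sub q c b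
  have hab : ‖c - y‖ ≤ ‖b - c‖ + ‖a - b‖ + ‖a - y‖ := by
    have := norm_sub_le_norm_sub_add_norm_sub c b y
    have := norm_sub_le_norm_sub_add_norm_sub b a y
    rw [norm_sub_rev c b, norm_sub_rev b a] at *
    linarith
  rw [norm_sub_rev p q]
  calc (1 + ε) * ‖a - p‖ + d + (1 + ε) * ‖q - b‖
      ≤ (1 + ε) * ((‖a - y‖ + ‖b - c‖) + s * d + ‖c - q‖) + d := by nlinarith
    _ ≤ (1 + ε) * (‖c - q‖ + (1 - ε / 8) * ((1 + s) * d) - (‖a - y‖ + ‖b - c‖)) := by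
        nlinarith [mul_le_mul_of_nonneg_left (add_le_add hay hbc) hε,
          mul_le_mul_of_nonneg_left hsd hε, mul_le_mul_of_nonneg_left hsd (mul_nonneg hε hε),
          mul_nonneg hε (norm_nonneg (q - p)),
          mul_nonneg (mul_nonneg hε hε) (norm_nonneg (q - p))]
    _ ≤ (1 + ε) * ‖a - b‖ := by gcongr; linarith

/-- For all `a ∈ Ã(p,q)` and `b ∈ B̂(p,q)`:
`(1+ε)·‖a-p‖ + ‖p-q‖ + (1+ε)·‖q-b‖ ≤ (1+ε)·‖a-b‖`. -/
theorem key_ineq_Atilde_Bhat (ε : ℝ) (hε0 : 0 < ε) (hε1 : ε < 1 / 9)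
    (p q : EuclideanSpace ℝ (Fin 2)) (hpq : p ≠ q)
    (a b : EuclideanSpace ℝ (Fin 2)) (ha : a ∈ Atilde ε p q) (hb : b ∈ Bhat ε p q) :
    (1 + ε) * ‖a - p‖ + ‖p - q‖ + (1 + ε) * ‖q - b‖ ≤ (1 + ε) * ‖a - b‖ :=
  key_ineq_Atilde_Bhat_general ε hε0 hε1 p q a b ha hb
end

section
/- Let 0 < ε < 1/9 and let p, q ∈ ℝ² be distinct points. Then every point q' ∈ W₁ \ W₂ satisfies ‖p − q'‖ ≤ 2·‖p − q‖. -/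
/-!
Put `x = q' - p` and `y = q - p`. If `‖x‖ > 2‖y‖`, then in the triangle `p q q'` the side `q q'`
is longer than `p q`, so the angle at `q'` is at most the angle `α` at `p` (law of sines, both
angles being acute). The exterior angle at `q` is the sum of these two, hence at most
`2α ≤ √ε / 2`, which puts `q'` in `W₂`.
-/

open InnerProductGeometry Real RealInnerProductSpace

section Triangle

variable {V : Type*} [NormedAddCommGroup V] [InnerProductSpace ℝ V] {x y : V}

theorem inner_nonneg_of_angle_le_pi_div_two (h : angle x y ≤ π / 2) : 0 ≤ ⟪x, y⟫ := by
  rw [← cos_angle_mul_norm_mul_norm]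
  exact mul_nonneg (cos_nonneg_of_mem_Icc ⟨by linarith [angle_nonneg x y, pi_pos], h⟩)
    (by positivity)

theorem angle_lt_pi_div_two_of_inner_pos (h : 0 < ⟪x, y⟫) : angle x y < π / 2 := by
  rw [angle, arccos_lt_pi_div_two]
  have hxy : 0 < ‖x‖ * ‖y‖ := lt_of_lt_of_le h (real_inner_le_norm x y)
  positivity

theorem angle_sub_eq_angle_add_angle_sub (hxy : x - y ≠ 0) :
    angle (x - y) y = angle x y + angle x (x - y) := by
  have h := angle_eq_angle_add_add_angle_add y hxy
  rw [add_sub_cancel] at h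
  rw [angle_comm, h, angle_comm y x, angle_comm (x - y) x]

theorem sin_angle_sub_mul_norm_sub (x y : V) :
    sin (angle x (x - y)) * ‖x - y‖ = sin (angle x y) * ‖y‖ := by
  rw [angle_comm x y, sin_angle_mul_norm_eq_sin_angle_mul_norm y x, ← neg_sub x y,
    angle_neg_right, sin_pi_sub, norm_neg]

theorem angle_sub_lt_pi_div_two (hxy : angle x y ≤ π / 2) (hy : ‖y‖ < ‖x - y‖) :
    angle x (x - y) < π / 2 := by
  apply angle_lt_pi_div_two_of_inner_pos
  have hinner := inner_nonneg_of_angle_le_pi_div_two hxy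
  have hsq : ‖y‖ ^ 2 < ‖x - y‖ ^ 2 := by gcongr
  rw [norm_sub_sq_real] at hsq
  rw [inner_sub_right, real_inner_self_eq_norm_sq]
  linarith

/-- The angle opposite the shorter side of a triangle is the smaller one. -/
theorem angle_sub_le_angle (hxy : angle x y ≤ π / 2) (hy : ‖y‖ < ‖x - y‖) :
    angle x (x - y) ≤ angle x y := by
  have hacute := angle_sub_lt_pi_div_two hxy hy
  have hsin : sin (angle x (x - y)) ≤ sin (angle x y) := by
    have hsin_nonneg : 0 ≤ sin (angle x y) := sin_nonneg_of_nonneg_of_le_pi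
      (angle_nonneg x y) (angle_le_pi x y)
    refine le_of_mul_le_mul_right ?_ (lt_of_le_of_lt (norm_nonneg y) hy)
    rw [sin_angle_sub_mul_norm_sub]
    exact mul_le_mul_of_nonneg_left hy.le hsin_nonneg
  have hmem (t : ℝ) (h0 : 0 ≤ t) (h1 : t ≤ π / 2) : t ∈ Set.Icc (-(π / 2)) (π / 2) :=
    ⟨by linarith [pi_pos], h1⟩
  exact (strictMonoOn_sin.le_iff_le (hmem _ (angle_nonneg _ _) hacute.le)
    (hmem _ (angle_nonneg _ _) hxy)).mp hsin

theorem angle_sub_le_two_mul_angle (hxy : angle x y ≤ π / 2) (hy : ‖y‖ < ‖x - y‖) :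
    angle (x - y) y ≤ 2 * angle x y := by
  have hne : x - y ≠ 0 := norm_pos_iff.mp (lt_of_le_of_lt (norm_nonneg y) hy)
  rw [angle_sub_eq_angle_add_angle_sub hne]
  linarith [angle_sub_le_angle hxy hy]

end Triangle

theorem norm_le_of_mem_W1_diff_W2_general (ε : ℝ) (hε1 : ε < 1 / 9)
    (p q : EuclideanSpace ℝ (Fin 2))
    (q' : EuclideanSpace ℝ (Fin 2)) (hq' : q' ∈ W1 ε p q \ W2 ε p q) :
    ‖p - q'‖ ≤ 2 * ‖p - q‖ := by
  obtain ⟨hq'p | hα, hθ⟩ := hq'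
  · simp [hq'p]
  simp only [W2, Set.mem_ofPred_eq, not_or, not_le] at hθ
  by_contra! hfar
  have hsub : (q' - p) - (q - p) = q' - q := sub_sub_sub_cancel_right q' q p
  have hside : ‖q - p‖ < ‖(q' - p) - (q - p)‖ := by
    rw [hsub]
    rw [norm_sub_rev p q', norm_sub_rev p q] at hfar
    linarith [norm_sub_le_norm_sub_add_norm_sub q' q p]
  have hα_le : angle (q' - p) (q - p) ≤ π / 2 := by
    linarith [sqrt_le_one.mpr (by linarith : ε ≤ 1), pi_gt_three]
  have hexterior := angle_sub_le_two_mul_angle hα_le hside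
  rw [hsub] at hexterior
  linarith [hθ.2]

/-- Every point `q' ∈ W₁ \ W₂` satisfies `‖p - q'‖ ≤ 2·‖p - q‖`. -/
theorem norm_le_of_mem_W1_diff_W2 (ε : ℝ) (hε0 : 0 < ε) (hε1 : ε < 1 / 9)
    (p q : EuclideanSpace ℝ (Fin 2)) (hpq : p ≠ q)
    (q' : EuclideanSpace ℝ (Fin 2)) (hq' : q' ∈ W1 ε p q \ W2 ε p q) :
    ‖p - q'‖ ≤ 2 * ‖p - q‖ :=
  norm_le_of_mem_W1_diff_W2_general ε hε1 p q q' hq'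
end

section
/- Let 0 < ε < 1/9, let u ∈ ℝ² be a unit vector, and let p, q, p', q' ∈ ℝ² be points such that q ≠ p, q' ≠ p', the angle between q − p and u is at most √ε/16, p' ∈ Â(p,q), the angle between q' − p' and u is at most √ε/16, and ‖p' − q'‖ ≥ (1/2)·‖p − q‖. Then q' ≠ p and the angle between q' − p and u is less than (3/16)·√ε. -/
/-- The segment `A(p,q)` of length `(√ε/16)·‖q-p‖` on the line `pq`, with one endpoint
at `p`, emanating away from `q`. -/
def Aseg (ε : ℝ) (p q : EuclideanSpace ℝ (Fin 2)) : Set (EuclideanSpace ℝ (Fin 2)) :=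
  {x | ∃ t : ℝ, 0 ≤ t ∧ t ≤ Real.sqrt ε / 16 * ‖q - p‖ ∧
    x = p - (t / ‖q - p‖) • (q - p)}

/-- `Â(p,q)`: the points within distance `(ε/64)·‖q-p‖` of `A(p,q)`. -/
def Ahat (ε : ℝ) (p q : EuclideanSpace ℝ (Fin 2)) : Set (EuclideanSpace ℝ (Fin 2)) :=
  {x | ∃ y ∈ Aseg ε p q, dist x y ≤ ε / 64 * ‖q - p‖}

open Real InnerProductGeometry InnerProductSpace

section AuxLemmas
variable {E : Type*} [NormedAddCommGroup E] [InnerProductSpace ℝ E]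

lemma perp_sq (u x : E) (hu : ‖u‖ = 1) :
    ‖x - ⟪x, u⟫_ℝ • u‖ ^ 2 = ‖x‖ ^ 2 - ⟪x, u⟫_ℝ ^ 2 := by
  rw [norm_sub_sq_real, norm_smul, real_inner_smul_right, hu]
  simp [mul_one]
  ring

lemma perp_le (u x : E) (hu : ‖u‖ = 1) : ‖x - ⟪x, u⟫_ℝ • u‖ ≤ ‖x‖ := by
  have h := perp_sq u x hu
  nlinarith [norm_nonneg (x - ⟪x, u⟫_ℝ • u), norm_nonneg x, sq_nonneg (⟪x, u⟫_ℝ)]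

lemma bounds_of_angle_le (u v : E) (hu : ‖u‖ = 1) (hv : v ≠ 0) (α : ℝ)
    (hα2 : α ≤ π / 2) (h : angle v u ≤ α) :
    ‖v‖ * Real.cos α ≤ ⟪v, u⟫_ℝ ∧ ‖v - ⟪v, u⟫_ℝ • u‖ ≤ ‖v‖ * Real.sin α := by
  have hα0 : 0 ≤ α := le_trans (angle_nonneg v u) h
  have hcosle : Real.cos α ≤ Real.cos (angle v u) :=
    Real.cos_le_cos_of_nonneg_of_le_pi (angle_nonneg v u) (by linarith [Real.pi_pos]) h
  have hvnorm : 0 < ‖v‖ := norm_pos_iff.2 hv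
  have hcoseq : Real.cos (angle v u) = ⟪v, u⟫_ℝ / (‖v‖ * ‖u‖) := cos_angle v u
  rw [hu, mul_one] at hcoseq
  have hinner : ‖v‖ * Real.cos α ≤ ⟪v, u⟫_ℝ := by
    rw [hcoseq] at hcosle
    calc ‖v‖ * Real.cos α ≤ ‖v‖ * (⟪v, u⟫_ℝ / ‖v‖) := by
          exact mul_le_mul_of_nonneg_left hcosle hvnorm.le
      _ = ⟪v, u⟫_ℝ := by field_simp
  refine ⟨hinner, ?_⟩
  have hcospos : 0 ≤ Real.cos α := Real.cos_nonneg_of_mem_Icc ⟨by linarith [Real.pi_pos], hα2⟩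
  have hsinpos : 0 ≤ Real.sin α := Real.sin_nonneg_of_nonneg_of_le_pi hα0 (by linarith [Real.pi_pos])
  have hc0 : 0 ≤ ⟪v, u⟫_ℝ := le_trans (by positivity) hinner
  have hps := perp_sq u v hu
  have hsc : Real.sin α ^ 2 = 1 - Real.cos α ^ 2 := by
    nlinarith [Real.sin_sq_add_cos_sq α]
  nlinarith [norm_nonneg (v - ⟪v, u⟫_ℝ • u),
    mul_self_le_mul_self (mul_nonneg hvnorm.le hcospos) hinner,
    mul_nonneg hvnorm.le hsinpos]

lemma key_lemma (u x : E) (hu : ‖u‖ = 1) (δ : ℝ) (hδ0 : 0 < δ) (hδπ : δ < π / 2)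
    (hc : 0 < ⟪x, u⟫_ℝ) (hP : ‖x - ⟪x, u⟫_ℝ • u‖ ≤ δ * ⟪x, u⟫_ℝ) :
    x ≠ 0 ∧ angle x u < δ := by
  have hx0 : x ≠ 0 := by rintro rfl; simp at hc
  refine ⟨hx0, ?_⟩
  set c := ⟪x, u⟫_ℝ with hcdef
  have hxnorm : 0 < ‖x‖ := norm_pos_iff.2 hx0
  have hps := perp_sq u x hu
  have hcosδ : 0 < Real.cos δ := Real.cos_pos_of_mem_Ioo ⟨by linarith [Real.pi_pos], hδπ⟩
  have hsinδ : Real.tan δ * Real.cos δ = Real.sin δ := Real.tan_mul_cos hcosδ.ne'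
  have htan : δ < Real.tan δ := Real.lt_tan hδ0 hδπ
  -- ‖Px‖ * cos δ < sin δ * c
  have hkey : ‖x - c • u‖ * Real.cos δ < Real.sin δ * c := by
    calc ‖x - c • u‖ * Real.cos δ ≤ δ * c * Real.cos δ :=
          mul_le_mul_of_nonneg_right hP hcosδ.le
      _ < Real.tan δ * c * Real.cos δ := by
          apply mul_lt_mul_of_pos_right _ hcosδ
          exact mul_lt_mul_of_pos_right htan hc
      _ = Real.sin δ * c := by rw [mul_right_comm, hsinδ]
  -- cos δ * ‖x‖ < c
  have hcx : Real.cos δ * ‖x‖ < c := by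
    have hsq : (Real.cos δ * ‖x‖) ^ 2 < c ^ 2 := by
      have h1 : Real.sin δ ^ 2 + Real.cos δ ^ 2 = 1 := Real.sin_sq_add_cos_sq δ
      nlinarith [norm_nonneg (x - c • u), mul_nonneg (norm_nonneg (x - c • u)) hcosδ.le,
        mul_nonneg (Real.sin_nonneg_of_nonneg_of_le_pi hδ0.le (by linarith [Real.pi_pos])) hc.le]
    exact lt_of_pow_lt_pow_left₀ 2 hc.le hsq
  have hcoseq : Real.cos (angle x u) = c / ‖x‖ := by
    rw [cos_angle, hu, mul_one]
  by_contra hcon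
  push_neg at hcon
  have : Real.cos (angle x u) ≤ Real.cos δ :=
    Real.cos_le_cos_of_nonneg_of_le_pi hδ0.le (angle_le_pi x u) hcon
  rw [hcoseq] at this
  have : c ≤ Real.cos δ * ‖x‖ := by
    calc c = (c / ‖x‖) * ‖x‖ := by field_simp
      _ ≤ Real.cos δ * ‖x‖ := mul_le_mul_of_nonneg_right this hxnorm.le
  linarith

end AuxLemmas

set_option maxHeartbeats 2000000 in
/-- Cone-covering lemma: if `q - p` makes angle at most `√ε/16` with a unit vector `u`,
`p' ∈ Â(p,q)`, `q' - p'` makes angle at most `√ε/16` with `u`, and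
`‖p' - q'‖ ≥ (1/2)·‖p - q‖`, then `q' ≠ p` and the angle between `q' - p` and `u` is
less than `(3/16)·√ε`. -/
theorem angle_from_p_lt (ε : ℝ) (hε0 : 0 < ε) (hε1 : ε < 1 / 9)
    (u : EuclideanSpace ℝ (Fin 2)) (hu : ‖u‖ = 1)
    (p q p' q' : EuclideanSpace ℝ (Fin 2)) (hq : q ≠ p) (hq'p' : q' ≠ p')
    (hangle1 : InnerProductGeometry.angle (q - p) u ≤ Real.sqrt ε / 16)
    (hp' : p' ∈ Ahat ε p q)
    (hangle2 : InnerProductGeometry.angle (q' - p') u ≤ Real.sqrt ε / 16)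
    (hlen : (1 / 2) * ‖p - q‖ ≤ ‖p' - q'‖) :
    q' ≠ p ∧ InnerProductGeometry.angle (q' - p) u < (3 / 16) * Real.sqrt ε := by
  obtain ⟨y, ⟨t, ht0, ht1, rfl⟩, hdist⟩ := hp'
  set r := Real.sqrt ε with hrdef
  have hr0 : 0 < r := Real.sqrt_pos.2 hε0
  have hε : ε = r ^ 2 := (Real.sq_sqrt hε0.le).symm
  have hr3 : r < 1 / 3 := by nlinarith
  have hπ : 3 < π := Real.pi_gt_three
  set w := q - p with hw
  set v := q' - p' with hv
  set s := ‖w‖ with hs'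
  have hwne : w ≠ 0 := sub_ne_zero.2 hq
  have hvne : v ≠ 0 := sub_ne_zero.2 hq'p'
  have hs : 0 < s := norm_pos_iff.2 hwne
  have hα2 : r / 16 ≤ π / 2 := by nlinarith
  obtain ⟨hCV, hPV⟩ := bounds_of_angle_le u v hu hvne (r / 16) hα2 (by
    simpa [hrdef, div_eq_mul_inv] using hangle2)
  obtain ⟨hCW, hPW⟩ := bounds_of_angle_le u w hu hwne (r / 16) hα2 (by
    simpa [hrdef, div_eq_mul_inv] using hangle1)
  set e := p' - (p - (t / s) • w) with he'
  have he : ‖e‖ ≤ r ^ 2 / 64 * s := by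
    have : dist p' (p - (t / s) • w) = ‖e‖ := by rw [dist_eq_norm, he']
    rw [this] at hdist
    calc ‖e‖ ≤ ε / 64 * s := hdist
      _ = r ^ 2 / 64 * s := by rw [hε]
  have hV : s / 2 ≤ ‖v‖ := by
    have h1 : ‖p - q‖ = s := by rw [hs', hw, norm_sub_rev]
    have h2 : ‖p' - q'‖ = ‖v‖ := by rw [hv, norm_sub_rev]
    rw [h1, h2] at hlen; linarith
  have ht1' : t ≤ r / 16 * s := ht1
  have hts : 0 ≤ t / s := div_nonneg ht0 hs.le
  have hx : q' - p = v - (t / s) • w + e := by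
    rw [hv, hw, he']; module
  have hCeq : ⟪q' - p, u⟫_ℝ = ⟪v, u⟫_ℝ - (t / s) * ⟪w, u⟫_ℝ + ⟪e, u⟫_ℝ := by
    rw [hx, inner_add_left, inner_sub_left, real_inner_smul_left]
  have hPeq : (q' - p) - ⟪q' - p, u⟫_ℝ • u =
      (v - ⟪v, u⟫_ℝ • u) - (t / s) • (w - ⟪w, u⟫_ℝ • u) + (e - ⟪e, u⟫_ℝ • u) := by
    rw [hCeq, hx]; module
  have hPle : ‖(q' - p) - ⟪q' - p, u⟫_ℝ • u‖ ≤
      ‖v - ⟪v, u⟫_ℝ • u‖ + (t / s) * ‖w - ⟪w, u⟫_ℝ • u‖ + ‖e - ⟪e, u⟫_ℝ • u‖ := by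
    rw [hPeq]
    refine le_trans (norm_add_le _ _) ?_
    have h1 : ‖(v - ⟪v, u⟫_ℝ • u) - (t / s) • (w - ⟪w, u⟫_ℝ • u)‖ ≤
        ‖v - ⟪v, u⟫_ℝ • u‖ + (t / s) * ‖w - ⟪w, u⟫_ℝ • u‖ := by
      refine le_trans (norm_sub_le _ _) ?_
      rw [norm_smul, Real.norm_eq_abs, abs_of_nonneg hts]
    linarith
  have hCWle : ⟪w, u⟫_ℝ ≤ s := by
    have := real_inner_le_norm w u; rw [hu, mul_one] at this; exact this
  have hCE : |⟪e, u⟫_ℝ| ≤ ‖e‖ := by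
    have := abs_real_inner_le_norm e u; rw [hu, mul_one] at this; exact this
  have hPE : ‖e - ⟪e, u⟫_ℝ • u‖ ≤ ‖e‖ := perp_le u e hu
  have hcosb : 1 - (r / 16) ^ 2 / 2 ≤ Real.cos (r / 16) := Real.one_sub_sq_div_two_le_cos
  have hsinb : Real.sin (r / 16) ≤ r / 16 := Real.sin_le (by positivity)
  have hsin0 : 0 ≤ Real.sin (r / 16) :=
    Real.sin_nonneg_of_nonneg_of_le_pi (by positivity) (by nlinarith)
  have htW : (t / s) * ⟪w, u⟫_ℝ ≤ t := by
    calc (t / s) * ⟪w, u⟫_ℝ ≤ (t / s) * s := mul_le_mul_of_nonneg_left hCWle hts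
      _ = t := div_mul_cancel₀ t hs.ne'
  have htPW : (t / s) * ‖w - ⟪w, u⟫_ℝ • u‖ ≤ t * Real.sin (r / 16) := by
    calc (t / s) * ‖w - ⟪w, u⟫_ℝ • u‖ ≤ (t / s) * (s * Real.sin (r / 16)) :=
          mul_le_mul_of_nonneg_left hPW hts
      _ = (t / s * s) * Real.sin (r / 16) := by ring
      _ = t * Real.sin (r / 16) := by rw [div_mul_cancel₀ t hs.ne']
  have hCElo : -(r ^ 2 / 64 * s) ≤ ⟪e, u⟫_ℝ := by
    have := (abs_le.1 hCE).1; linarith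
  have hVc : (s / 2) * (1 - (r / 16) ^ 2 / 2) ≤ ‖v‖ * Real.cos (r / 16) := by
    have hc0 : (0:ℝ) ≤ 1 - (r / 16) ^ 2 / 2 := by nlinarith
    have h1 : (s / 2) * (1 - (r / 16) ^ 2 / 2) ≤ ‖v‖ * (1 - (r / 16) ^ 2 / 2) :=
      mul_le_mul_of_nonneg_right hV hc0
    have h2 : ‖v‖ * (1 - (r / 16) ^ 2 / 2) ≤ ‖v‖ * Real.cos (r / 16) :=
      mul_le_mul_of_nonneg_left hcosb (norm_nonneg v)
    linarith
  have hC : 0 < ⟪q' - p, u⟫_ℝ := by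
    rw [hCeq]
    nlinarith [mul_pos hs hr0, sq_nonneg r, mul_pos (mul_pos hs hr0) hr0]
  have hClo : ‖v‖ * Real.cos (r / 16) - r / 16 * s - r ^ 2 / 64 * s ≤ ⟪q' - p, u⟫_ℝ := by
    rw [hCeq]; linarith
  have hδ0 : 0 < 3 / 16 * r := by positivity
  have hδπ : 3 / 16 * r < π / 2 := by nlinarith
  have hP : ‖(q' - p) - ⟪q' - p, u⟫_ℝ • u‖ ≤ (3 / 16 * r) * ⟪q' - p, u⟫_ℝ := by
    have hA1 : ‖v - ⟪v, u⟫_ℝ • u‖ ≤ ‖v‖ * (r / 16) := by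
      refine le_trans hPV (mul_le_mul_of_nonneg_left hsinb (norm_nonneg v))
    have hA2 : t * Real.sin (r / 16) ≤ (r / 16 * s) * (r / 16) :=
      mul_le_mul ht1' hsinb hsin0 (by positivity)
    have hA3 : (3 / 16 * r) * (‖v‖ * Real.cos (r / 16) - r / 16 * s - r ^ 2 / 64 * s) ≤
        (3 / 16 * r) * ⟪q' - p, u⟫_ℝ := mul_le_mul_of_nonneg_left hClo (by positivity)
    have hVr : (s / 2) * r ≤ ‖v‖ * r := mul_le_mul_of_nonneg_right hV hr0.le
    have hrsq : r ^ 2 ≤ 1 / 9 := by nlinarith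
    have hVcr : (3 / 16 * r) * ((s / 2) * (1 - (r / 16) ^ 2 / 2)) ≤
        (3 / 16 * r) * (‖v‖ * Real.cos (r / 16)) :=
      mul_le_mul_of_nonneg_left hVc (by positivity)
    nlinarith [mul_pos hs hr0, mul_pos (mul_pos hs hr0) hr0,
      mul_le_mul_of_nonneg_right hVr (mul_nonneg hr0.le hr0.le),
      mul_nonneg (norm_nonneg v) hr0.le, norm_nonneg v,
      mul_le_mul_of_nonneg_right hVr hr0.le]
  obtain ⟨hne, hang⟩ := key_lemma u (q' - p) hu (3 / 16 * r) hδ0 hδπ hC hP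
  exact ⟨sub_ne_zero.1 hne, by simpa [hrdef] using hang⟩
end

section
/- There is a constant C > 0 such that for every integer k ≥ 2 the following holds. For each i ∈ {1, …, k}, let q_i be the least positive integer q such that there exists an integer p with (i−1)/k ≤ p/q ≤ i/k (such q exists, since q = k works). Then ∑_{i=1}^{k} q_i ≤ C · k^{3/2} · (log k)^{1/2}. -/
/-!
Let `ξ_i = (2i - 1)/(2k)` be the midpoint of the `i`-th cell. If `q_i ≥ n ≥ 2`, Dirichlet's
theorem gives `0 < a < n` and `p` with `|a ξ_i - p| ≤ 1/n`; as `a < q_i`, the fraction `p/a` is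
not in the cell, so `1/(2k) < |ξ_i - p/a| ≤ 1/(an)` and hence `an ≤ 2k`. Midpoints are `1/k`
apart, so each such `p/a` (with `0 ≤ p ≤ a`) is within `1/(an)` of at most `4k/(an)` of them,
and at most `16k²/n²` cells have `q_i ≥ n`. Writing `∑ q_i = ∑_n #{i | q_i ≥ n}` and using the
trivial bound `k` for `n ≤ √k` gives `∑ q_i ≤ 33 k^{3/2}`.
-/

open Finset

def cellDenominators (k i : ℕ) : Set ℕ :=
  {m : ℕ | 0 < m ∧ ∃ p : ℤ, ((i : ℝ) - 1) / k ≤ (p : ℝ) / m ∧ (p : ℝ) / m ≤ (i : ℝ) / k}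

noncomputable def cellCenter (k i : ℕ) : ℝ := (2 * i - 1) / (2 * k)

theorem card_le_of_forall_le_add {s : Finset ℕ} {d : ℝ} (hd : 0 ≤ d)
    (h : ∀ i ∈ s, ∀ j ∈ s, (i : ℝ) ≤ j + d) : (#s : ℝ) ≤ d + 1 := by
  rcases s.eq_empty_or_nonempty with rfl | hs
  · simpa using by linarith
  have hsub : s ⊆ Icc (s.min' hs) (s.max' hs) := fun i hi =>
    mem_Icc.2 ⟨s.min'_le i hi, s.le_max' i hi⟩
  have hcard : #s + s.min' hs ≤ s.max' hs + 1 := by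
    have := card_le_card hsub
    rw [Nat.card_Icc] at this
    have := s.min'_le_max' hs
    omega
  have hdiam := h _ (s.max'_mem hs) _ (s.min'_mem hs)
  have : ((#s + s.min' hs : ℕ) : ℝ) ≤ (s.max' hs + 1 : ℕ) := by exact_mod_cast hcard
  push_cast at this
  linarith

theorem mem_cellDenominators_of_abs_sub_le {k i a : ℕ} {p : ℤ} (hk : 0 < k) (ha : 0 < a)
    (h : |cellCenter k i - p / a| ≤ 1 / (2 * k)) : a ∈ cellDenominators k i := by
  refine ⟨ha, p, ?_, ?_⟩ <;> rw [abs_le, cellCenter] at h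
  · have : ((i : ℝ) - 1) / k = (2 * i - 1) / (2 * k) - 1 / (2 * k) := by field_simp; ring
    linarith
  · have : (i : ℝ) / k = (2 * i - 1) / (2 * k) + 1 / (2 * k) := by field_simp; ring
    linarith

theorem le_of_isLeast_cellDenominators {k i q : ℕ} (hk : 0 < k)
    (hq : IsLeast (cellDenominators k i) q) : q ≤ k :=
  hq.2 ⟨hk, i, by rw [Int.cast_natCast]; gcongr; linarith, by rw [Int.cast_natCast]⟩

theorem cellCenter_mem_Ioo {k i : ℕ} (hi : i ∈ Icc 1 k) : cellCenter k i ∈ Set.Ioo 0 1 := by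
  obtain ⟨hi1, hik⟩ := mem_Icc.1 hi
  have hi1' : (1 : ℝ) ≤ i := by exact_mod_cast hi1
  have hik' : (i : ℝ) ≤ k := by exact_mod_cast hik
  constructor
  · unfold cellCenter; apply div_pos <;> linarith
  · rw [cellCenter, div_lt_one (by linarith)]; linarith

theorem mem_Icc_of_abs_mul_sub_lt_one {ξ : ℝ} (hξ : ξ ∈ Set.Ioo 0 1) {a : ℕ} {p : ℤ}
    (h : |a * ξ - p| < 1) : p ∈ Icc (0 : ℤ) a := by
  obtain ⟨hξ0, hξ1⟩ := hξ
  obtain ⟨hlo, hhi⟩ := abs_lt.1 h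
  have hp0 : ((-1 : ℤ) : ℝ) < p := by push_cast; nlinarith
  have hpa : (p : ℝ) < ((a + 1 : ℤ) : ℝ) := by push_cast; nlinarith
  exact mem_Icc.2 ⟨by exact_mod_cast Int.cast_lt.1 hp0, Int.lt_add_one_iff.1 (Int.cast_lt.1 hpa)⟩

theorem exists_fraction_near_cellCenter {k i q n : ℕ} (hk : 0 < k) (hi : i ∈ Icc 1 k)
    (hq : IsLeast (cellDenominators k i) q) (hn : 2 ≤ n) (hnq : n ≤ q) :
    ∃ a ∈ Icc 1 (2 * k / n), ∃ p ∈ Icc (0 : ℤ) a, |cellCenter k i - p / a| ≤ 1 / (a * n) := by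
  obtain ⟨a, ha, han, hdir⟩ :=
    Real.exists_nat_abs_mul_sub_round_le (cellCenter k i) (n := n - 1) (by omega)
  set p := round (a * cellCenter k i)
  rw [Nat.cast_sub (by omega), Nat.cast_one, sub_add_cancel] at hdir
  have ha' : (0 : ℝ) < a := by exact_mod_cast ha
  have hn' : (2 : ℝ) ≤ n := by exact_mod_cast hn
  have hclose : |cellCenter k i - p / a| ≤ 1 / (a * n) := by
    have : cellCenter k i - p / a = (a * cellCenter k i - p) / a := by field_simp
    rw [this, abs_div, abs_of_pos ha', div_le_div_iff₀ ha' (by positivity)]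
    calc |a * cellCenter k i - p| * (a * n) = (|a * cellCenter k i - p| * n) * a := by ring
      _ ≤ 1 * a := by
        gcongr
        rwa [le_div_iff₀ (by positivity)] at hdir
  have hfar : 1 / (2 * k) < |cellCenter k i - p / a| := by
    by_contra! h
    have := hq.2 (mem_cellDenominators_of_abs_sub_le hk ha h)
    omega
  have han_le : a * n ≤ 2 * k := by
    have : (a : ℝ) * n < 2 * k := by
      have := hfar.trans_le hclose
      rwa [one_div_lt_one_div (by positivity) (by positivity)] at this
    exact_mod_cast this.le
  have hp : p ∈ Icc (0 : ℤ) a := mem_Icc_of_abs_mul_sub_lt_one (cellCenter_mem_Ioo hi)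
    (hdir.trans_lt (by rw [div_lt_one (by positivity)]; linarith))
  exact ⟨a, mem_Icc.2 ⟨ha, (Nat.le_div_iff_mul_le (by omega)).2 han_le⟩, p, hp, hclose⟩

theorem card_filter_abs_cellCenter_sub_le {k : ℕ} (hk : 0 < k) (y : ℝ) {δ : ℝ} (hδ : 0 ≤ δ) :
    (#{i ∈ Icc 1 k | |cellCenter k i - y| ≤ δ} : ℝ) ≤ 2 * k * δ + 1 := by
  refine card_le_of_forall_le_add (by positivity) fun i hi j hj => ?_
  have hij : (i : ℝ) - j = k * (cellCenter k i - cellCenter k j) := by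
    unfold cellCenter; field_simp; ring
  have hdist : cellCenter k i - cellCenter k j ≤ 2 * δ := by
    have := abs_le.1 (mem_filter.1 hi).2
    have := abs_le.1 (mem_filter.1 hj).2
    linarith
  nlinarith

theorem card_filter_abs_cellCenter_sub_le_of_mul_le {k a n : ℕ} (hk : 0 < k) (ha : 0 < a)
    (hn : 0 < n) (han : a * n ≤ 2 * k) (p : ℤ) :
    (#{i ∈ Icc 1 k | |cellCenter k i - p / a| ≤ 1 / (a * n)} : ℝ) ≤ 4 * k / (a * n) := by
  have han' : (a : ℝ) * n ≤ 2 * k := by exact_mod_cast han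
  calc _ ≤ 2 * (k : ℝ) * (1 / (a * n)) + 1 :=
        card_filter_abs_cellCenter_sub_le hk _ (by positivity)
    _ ≤ 4 * k / (a * n) := by
      rw [mul_one_div, ← sub_nonneg, show (4 : ℝ) * k / (a * n) - (2 * k / (a * n) + 1)
        = (2 * k - a * n) / (a * n) by field_simp; ring]
      exact div_nonneg (by linarith) (by positivity)

theorem card_filter_le_denominator_le {k n : ℕ} {q : ℕ → ℕ} (hk : 0 < k)
    (hq : ∀ i ∈ Icc 1 k, IsLeast (cellDenominators k i) (q i)) (hn : 2 ≤ n) :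
    (#{i ∈ Icc 1 k | n ≤ q i} : ℝ) ≤ 16 * k ^ 2 / n ^ 2 := by
  set near : ℕ → ℤ → Finset ℕ :=
    fun a p => {i ∈ Icc 1 k | |cellCenter k i - p / a| ≤ 1 / (a * n)}
  have hsub : {i ∈ Icc 1 k | n ≤ q i} ⊆
      (Icc 1 (2 * k / n)).biUnion fun a => (Icc (0 : ℤ) a).biUnion (near a) := by
    intro i hi
    obtain ⟨hi, hni⟩ := mem_filter.1 hi
    obtain ⟨a, ha, p, hp, hclose⟩ := exists_fraction_near_cellCenter hk hi (hq i hi) hn hni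
    exact mem_biUnion.2 ⟨a, ha, mem_biUnion.2 ⟨p, hp, mem_filter.2 ⟨hi, hclose⟩⟩⟩
  have hrow : ∀ a ∈ Icc 1 (2 * k / n), ∑ p ∈ Icc (0 : ℤ) a, (#(near a p) : ℝ) ≤ 8 * k / n := by
    intro a ha
    obtain ⟨ha1, han⟩ := mem_Icc.1 ha
    have ha1' : (1 : ℝ) ≤ a := by exact_mod_cast ha1
    calc _ ≤ ∑ p ∈ Icc (0 : ℤ) a, 4 * (k : ℝ) / (a * n) := sum_le_sum fun p _ =>
          card_filter_abs_cellCenter_sub_le_of_mul_le hk ha1 (by omega)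
            ((Nat.le_div_iff_mul_le (by omega)).1 han) p
      _ = (a + 1) * (4 * k / (a * n)) := by
        rw [sum_const, Int.card_Icc, nsmul_eq_mul, sub_zero, Int.toNat_natCast_add_one]
        push_cast; ring
      _ ≤ 8 * k / n := by
        rw [← sub_nonneg, show (8 : ℝ) * k / n - (a + 1) * (4 * k / (a * n))
          = 4 * k * (a - 1) / (a * n) by field_simp; ring]
        exact div_nonneg (by nlinarith) (by positivity)
  calc (#{i ∈ Icc 1 k | n ≤ q i} : ℝ)
      ≤ ∑ a ∈ Icc 1 (2 * k / n), ∑ p ∈ Icc (0 : ℤ) a, (#(near a p) : ℝ) := by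
        exact_mod_cast (card_le_card hsub).trans
          (card_biUnion_le.trans (sum_le_sum fun a _ => card_biUnion_le))
    _ ≤ ∑ a ∈ Icc 1 (2 * k / n), 8 * (k : ℝ) / n := sum_le_sum hrow
    _ = ((2 * k / n : ℕ) : ℝ) * (8 * k / n) := by rw [sum_const, Nat.card_Icc, nsmul_eq_mul]; simp
    _ ≤ (2 * k / n) * (8 * k / n) := by
        gcongr
        exact_mod_cast Nat.cast_div_le (α := ℝ) (m := 2 * k) (n := n)
    _ = 16 * k ^ 2 / n ^ 2 := by ring

theorem sum_eq_sum_card_filter_le {ι : Type*} (s : Finset ι) (f : ι → ℕ) {N : ℕ}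
    (hf : ∀ i ∈ s, f i ≤ N) : ∑ i ∈ s, f i = ∑ n ∈ Ioc 0 N, #{i ∈ s | n ≤ f i} := by
  calc ∑ i ∈ s, f i = ∑ i ∈ s, #{n ∈ Ioc 0 N | n ≤ f i} := by
        refine sum_congr rfl fun i hi => ?_
        rw [show {n ∈ Ioc 0 N | n ≤ f i} = Ioc 0 (f i) by
          ext n; simp only [mem_filter, mem_Ioc]; have := hf i hi; omega]
        simp
    _ = _ := sum_card_bipartiteAbove_eq_sum_card_bipartiteBelow (r := fun i n => n ≤ f i)

theorem sum_denominators_le_mul_sqrt {k : ℕ} {q : ℕ → ℕ} (hk : 0 < k)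
    (hq : ∀ i ∈ Icc 1 k, IsLeast (cellDenominators k i) (q i)) :
    ∑ i ∈ Icc 1 k, (q i : ℝ) ≤ 33 * k * √k := by
  set m := Nat.sqrt k
  have hm : 1 ≤ m := Nat.le_sqrt.2 (by omega)
  have hk' : (0 : ℝ) < k := by exact_mod_cast hk
  have hm_le : (m : ℝ) ≤ √k := Real.nat_sqrt_le_real_sqrt
  have hm_gt : √(k : ℝ) < m + 1 := Real.real_sqrt_lt_nat_sqrt_succ
  have hsmall : ∑ n ∈ Ioc 0 m, (#{i ∈ Icc 1 k | n ≤ q i} : ℝ) ≤ k * √k :=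
    calc _ ≤ ∑ n ∈ Ioc 0 m, (k : ℝ) := sum_le_sum fun n _ => by
          exact_mod_cast (card_filter_le _ _).trans (by simp)
      _ = m * k := by simp
      _ ≤ √k * k := by gcongr
      _ = k * √k := mul_comm _ _
  have hlarge : ∑ n ∈ Ioc m k, (#{i ∈ Icc 1 k | n ≤ q i} : ℝ) ≤ 32 * k * √k :=
    calc _ ≤ ∑ n ∈ Ioc m k, 16 * (k : ℝ) ^ 2 * ((n : ℝ) ^ 2)⁻¹ := sum_le_sum fun n hn =>
          (card_filter_le_denominator_le hk hq (by have := (mem_Ioc.1 hn).1; omega)).trans_eq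
            (div_eq_mul_inv _ _)
      _ = 16 * k ^ 2 * ∑ n ∈ Ioo m (k + 1), ((n : ℝ) ^ 2)⁻¹ := by
        rw [← mul_sum, Finset.Ioo_add_one_right_eq_Ioc]
      _ ≤ 16 * k ^ 2 * (2 / (m + 1)) := by gcongr; exact sum_Ioo_inv_sq_le m (k + 1)
      _ ≤ 16 * k ^ 2 * (2 / √k) := by gcongr
      _ = 32 * k * √k := by
        field_simp
        rw [Real.sq_sqrt hk'.le]
        ring
  calc ∑ i ∈ Icc 1 k, (q i : ℝ) = ∑ n ∈ Ioc 0 k, (#{i ∈ Icc 1 k | n ≤ q i} : ℝ) := by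
        exact_mod_cast sum_eq_sum_card_filter_le _ q
          fun i hi => le_of_isLeast_cellDenominators hk (hq i hi)
    _ = ∑ n ∈ Ioc 0 m, (#{i ∈ Icc 1 k | n ≤ q i} : ℝ)
        + ∑ n ∈ Ioc m k, (#{i ∈ Icc 1 k | n ≤ q i} : ℝ) :=
      (sum_Ioc_consecutive _ m.zero_le (Nat.sqrt_le_self k)).symm
    _ ≤ 33 * k * √k := by linarith

/-- If `q i` is, for each `i ∈ {1, …, k}`, the least positive integer `q` such that the
interval `[(i-1)/k, i/k]` contains a rational with denominator `q`, then
`∑ q_i ≤ C · k^{3/2} · (log k)^{1/2}` for an absolute constant `C`. -/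
theorem farey_denominator_sum :
    ∃ C : ℝ, 0 < C ∧ ∀ k : ℕ, 2 ≤ k → ∀ q : ℕ → ℕ,
      (∀ i ∈ Finset.Icc 1 k,
        IsLeast {m : ℕ | 0 < m ∧ ∃ p : ℤ,
          ((i : ℝ) - 1) / k ≤ (p : ℝ) / m ∧ (p : ℝ) / m ≤ (i : ℝ) / k} (q i)) →
      (∑ i ∈ Finset.Icc 1 k, (q i : ℝ)) ≤
        C * (k : ℝ) ^ ((3 : ℝ) / 2) * Real.sqrt (Real.log k) := by
  refine ⟨66, by norm_num, fun k hk q hq => ?_⟩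
  have hk' : (0 : ℝ) < k := by positivity
  have hpow : (k : ℝ) ^ ((3 : ℝ) / 2) = k * √k := by
    rw [show (3 : ℝ) / 2 = 1 + 1 / 2 by norm_num, Real.rpow_add hk', Real.rpow_one,
      Real.sqrt_eq_rpow]
  have hlog : 1 / 2 ≤ √(Real.log k) := by
    refine Real.le_sqrt_of_sq_le ?_
    have := Real.log_le_log (by norm_num) (show (2 : ℝ) ≤ k by exact_mod_cast hk)
    linarith [Real.log_two_gt_d9]
  calc _ ≤ 33 * k * √k := sum_denominators_le_mul_sqrt (by omega) hq
    _ ≤ 66 * (k : ℝ) ^ ((3 : ℝ) / 2) * √(Real.log k) := by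
      rw [hpow]
      nlinarith [mul_pos hk' (Real.sqrt_pos.2 hk')]
end
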